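/- Let G be a finite simple graph and suppose a vertex v dominates a vertex u. Then there exists a minimum-size 3-path vertex cover S of G such that either v ∈ S, or (N(v) ∖ {u} ⊆ S and u ∉ S and v ∉ S). -/

import Mathlib

/-!
Take a minimum 3-path vertex cover `T`. If `v ∈ T` we are done. If `u ∈ T` but `v ∉ T`, replace
`u` by `v`: since `v` dominates `u`, redirecting `u` to `v` maps every 3-path missed by the new
set to a 3-path missed by `T`, so the new set is again a cover and is no larger. If neither lies
in `T`, each path `u v w` forces `w ∈ T`.
-/

/-- `S` is a 3-path vertex cover of `H`: every path on 3 vertices contains a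
vertex of `S`. -/
def IsPVC3 {V : Type*} (H : SimpleGraph V) (S : Set V) : Prop :=
  ∀ a b c : V, H.Adj a b → H.Adj b c → a ≠ c → a ∈ S ∨ b ∈ S ∨ c ∈ S

namespace IsPVC3

variable {V : Type*} {G : SimpleGraph V} {T : Set V} {u v : V}

theorem univ (G : SimpleGraph V) : IsPVC3 G Set.univ :=
  fun a _ _ _ _ _ => Or.inl (Set.mem_univ a)

theorem exists_minimum [Finite V] (G : SimpleGraph V) :
    ∃ S : Set V, IsPVC3 G S ∧ ∀ T : Set V, IsPVC3 G T → S.ncard ≤ T.ncard :=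
  Set.exists_min_image {T : Set V | IsPVC3 G T} Set.ncard (Set.toFinite _) ⟨_, univ G⟩

theorem neighborSet_diff_subset (hT : IsPVC3 G T) (huv : G.Adj u v) (hu : u ∉ T)
    (hv : v ∉ T) : G.neighborSet v \ {u} ⊆ T := fun w ⟨hvw, hwu⟩ =>
  (hT u v w huv hvw fun h => hwu h.symm).resolve_left hu |>.resolve_left hv

end IsPVC3

namespace SimpleGraph

variable {V : Type*} {G : SimpleGraph V} {u v : V}

theorem adj_of_neighborSet_subset (hsub : G.neighborSet u ⊆ insert v (G.neighborSet v))
    {w : V} (huw : G.Adj u w) (hwv : w ≠ v) : G.Adj v w :=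
  (hsub huw).resolve_left hwv

theorem adj_update_id_of_neighborSet_subset [DecidableEq V]
    (hsub : G.neighborSet u ⊆ insert v (G.neighborSet v)) {x y : V} (hxy : G.Adj x y)
    (hx : x ≠ v) (hy : y ≠ v) :
    G.Adj (Function.update id u v x) (Function.update id u v y) := by
  by_cases hxu : x = u <;> by_cases hyu : y = u <;>
    simp only [Function.update_apply, hxu, hyu, if_true, if_false, id] <;> subst_vars
  · exact absurd hxy (G.irrefl)
  · exact adj_of_neighborSet_subset hsub hxy hy
  · exact (adj_of_neighborSet_subset hsub hxy.symm hx).symm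
  · exact hxy

end SimpleGraph

open SimpleGraph in
theorem IsPVC3.insert_diff_of_neighborSet_subset {V : Type*} {G : SimpleGraph V} {T : Set V}
    {u v : V} (hsub : G.neighborSet u ⊆ insert v (G.neighborSet v)) (hT : IsPVC3 G T)
    (hv : v ∉ T) : IsPVC3 G (insert v (T \ {u})) := by
  classical
  intro a b c hab hbc hac
  by_contra! hmiss
  set φ := Function.update (id : V → V) u v
  have hne : ∀ {x}, x ∉ insert v (T \ {u}) → x ≠ v := fun hx h => hx (h ▸ Set.mem_insert _ _)
  have hφT : ∀ {x}, x ∉ insert v (T \ {u}) → φ x ∉ T := by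
    intro x hx hφx
    by_cases hxu : x = u
    · simp only [φ, hxu, Function.update_self] at hφx
      exact hv hφx
    · simp only [φ, Function.update_of_ne hxu, id] at hφx
      exact hx (Set.mem_insert_of_mem _ ⟨hφx, hxu⟩)
  have hφac : φ a ≠ φ c := by
    have hφinj : Set.InjOn φ {x | x ≠ v} := fun x hx y hy hxy => by
      by_cases hxu : x = u <;> by_cases hyu : y = u <;>
        simp_all [φ, Function.update_apply]
    exact fun h => hac (hφinj (hne hmiss.1) (hne hmiss.2.2) h)
  obtain ⟨ha, hb, hc⟩ := hmiss
  rcases hT (φ a) (φ b) (φ c)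
    (adj_update_id_of_neighborSet_subset hsub hab (hne ha) (hne hb))
    (adj_update_id_of_neighborSet_subset hsub hbc (hne hb) (hne hc)) hφac with h | h | h
  exacts [hφT ha h, hφT hb h, hφT hc h]

/-- Correctness of rule (B2): if `v` dominates `u`, then there is a minimum
3-path vertex cover `S` such that `v ∈ S`, or `N(v) \ {u} ⊆ S`, `u ∉ S` and
`v ∉ S`. -/
theorem rule_B2_correct {V : Type*} [Fintype V] (G : SimpleGraph V) (v u : V)
    (hdom : G.Adj u v ∧ G.neighborSet u ⊆ insert v (G.neighborSet v)) :
    ∃ S : Set V, IsPVC3 G S ∧ (∀ T : Set V, IsPVC3 G T → S.ncard ≤ T.ncard) ∧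
      (v ∈ S ∨ (G.neighborSet v \ {u} ⊆ S ∧ u ∉ S ∧ v ∉ S)) := by
  obtain ⟨huv, hsub⟩ := hdom
  obtain ⟨T, hT, hTmin⟩ := IsPVC3.exists_minimum G
  by_cases hv : v ∈ T
  · exact ⟨T, hT, hTmin, Or.inl hv⟩
  by_cases hu : u ∈ T
  · refine ⟨insert v (T \ {u}), hT.insert_diff_of_neighborSet_subset hsub hv,
      fun T' hT' => ?_, Or.inl (Set.mem_insert _ _)⟩
    calc (insert v (T \ {u})).ncard ≤ (T \ {u}).ncard + 1 := Set.ncard_insert_le _ _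
      _ = T.ncard := Set.ncard_sdiff_singleton_add_one hu (Set.toFinite T)
      _ ≤ T'.ncard := hTmin T' hT'
  · exact ⟨T, hT, hTmin, Or.inr ⟨hT.neighborSet_diff_subset huv hu hv, hu, hv⟩⟩
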